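/- arXiv:1301.0106 — 2 statements merged into one kernel-verified Lean document; each statement's English description precedes it below -/
import Mathlib

section
/- Let r > 1 and p⁰, q⁰ ≥ 1. Suppose p'⁰, q'⁰ ≥ 1 satisfy p'⁰ + q'⁰ = p⁰ + q⁰ and p'⁰ ≤ (√(p⁰) + √(q⁰))²/2. Then G := (p'⁰)^r + (q'⁰)^r − (p⁰)^r − (q⁰)^r satisfies G ≤ C_r ((p⁰)^{r−1/2}(q⁰)^{1/2} + (p⁰)^{1/2}(q⁰)^{r−1/2}) − c_r ((p⁰)^r + (q⁰)^r), where C_r, c_r > 0 depend only on r (one may take c_r = 1 − 2^{2−r} for r > 2, or argue via (a+b)^{2r} ≤ a^{2r}+b^{2r}+C_r(a^{2r−1}b+ab^{2r−1}) with a=√(p⁰), b=√(q⁰)). -/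
/-!
Assume `q ≤ p`; everything is homogeneous of degree `r`, so only the ratio `q / p` matters.
If `q / p ≥ s²`, then `p'^r + q'^r ≤ (p + q)^r ≤ 2^r p^r` is absorbed by the cross term
`p^(r-1/2) q^(1/2) ≥ s p^r`. If `q / p ≤ s²`, the angular restriction gives `p' ≤ (1 + s)² p / 2`,
and `p'^r + q'^r ≤ p'^(r-1) (p' + q')` is at most `((1 + s)² / 2)^(r-1) (1 + s²) p^r`; the factor
tends to `2^(1-r) < 1` as `s → 0`, which yields the gain `c`.
-/

open Real Topology

lemma exists_pos_rpow_sq_div_two_mul_lt_one {r : ℝ} (hr : 1 < r) :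
    ∃ s : ℝ, 0 < s ∧ ((1 + s) ^ 2 / 2) ^ (r - 1) * (1 + s ^ 2) < 1 := by
  have hcont : ContinuousAt (fun s : ℝ => ((1 + s) ^ 2 / 2) ^ (r - 1) * (1 + s ^ 2)) 0 := by
    refine ContinuousAt.mul ?_ (by fun_prop)
    exact (continuousAt_rpow_const _ _ (Or.inl (by norm_num))).comp (by fun_prop)
  have hzero : ((1 + 0) ^ 2 / 2 : ℝ) ^ (r - 1) * (1 + 0 ^ 2) < 1 := by
    norm_num
    exact rpow_lt_one (by norm_num) (by norm_num) (by linarith)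
  obtain ⟨s, hs, hpos⟩ :=
    ((hcont.eventually (gt_mem_nhds hzero)).filter_mono nhdsWithin_le_nhds).and
      (self_mem_nhdsWithin : Set.Ioi (0 : ℝ) ∈ 𝓝[>] 0) |>.exists
  exact ⟨s, hpos, hs⟩

lemma rpow_sub_one_mul_self {p r : ℝ} (hp : 0 ≤ p) (hr : r ≠ 0) : p ^ (r - 1) * p = p ^ r := by
  rw [← rpow_add_one' hp (by simpa using hr), sub_add_cancel]

lemma rpow_add_rpow_le_rpow_sub_one_mul_add {p q r : ℝ} (hq : 0 ≤ q) (hqp : q ≤ p)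
    (hr : 1 ≤ r) : p ^ r + q ^ r ≤ p ^ (r - 1) * (p + q) := by
  have hr0 : r ≠ 0 := by positivity
  rw [mul_add, rpow_sub_one_mul_self (hq.trans hqp) hr0, ← rpow_sub_one_mul_self hq hr0]
  gcongr

lemma mul_rpow_le_rpow_sub_half_mul_sqrt {p q r s : ℝ} (hp : 0 < p) (hs : 0 ≤ s)
    (h : s ^ 2 * p ≤ q) : s * p ^ r ≤ p ^ (r - 1 / 2) * q ^ (1 / 2 : ℝ) := by
  have hsqrt : s * √p ≤ √q := by
    simpa [sqrt_mul' _ hp.le, sqrt_sq hs] using sqrt_le_sqrt h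
  calc s * p ^ r = p ^ (r - 1 / 2) * (s * √p) := by
        rw [sqrt_eq_rpow, mul_left_comm, ← rpow_add hp, sub_add_cancel]
    _ ≤ p ^ (r - 1 / 2) * q ^ (1 / 2 : ℝ) := by
        rw [← sqrt_eq_rpow]
        gcongr

lemma rpow_add_rpow_le_cross_term_of_sq_mul_le {p q p' q' r s : ℝ} (hp : 0 < p) (hs : 0 < s)
    (hqp : q ≤ p) (hsq : s ^ 2 * p ≤ q) (hp' : 0 ≤ p') (hq' : 0 ≤ q') (hsum : p' + q' = p + q)
    (hr : 1 ≤ r) : p' ^ r + q' ^ r ≤ 2 ^ r / s * (p ^ (r - 1 / 2) * q ^ (1 / 2 : ℝ)) := by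
  calc p' ^ r + q' ^ r ≤ (p' + q') ^ r := add_rpow_le_rpow_add hp' hq' hr
    _ ≤ (2 * p) ^ r := by rw [hsum]; gcongr <;> linarith
    _ = 2 ^ r / s * (s * p ^ r) := by rw [mul_rpow zero_le_two hp.le]; field_simp
    _ ≤ 2 ^ r / s * (p ^ (r - 1 / 2) * q ^ (1 / 2 : ℝ)) := by
        gcongr 2 ^ r / s * ?_
        exact mul_rpow_le_rpow_sub_half_mul_sqrt hp hs.le hsq

lemma rpow_add_rpow_le_of_le_sq_mul {p q p' q' r s : ℝ} (hp : 0 < p) (hs : 0 ≤ s)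
    (hsq : q ≤ s ^ 2 * p) (hq' : 0 ≤ q') (hqp' : q' ≤ p') (hsum : p' + q' = p + q)
    (hang : p' ≤ (√p + √q) ^ 2 / 2) (hr : 1 ≤ r) :
    p' ^ r + q' ^ r ≤ ((1 + s) ^ 2 / 2) ^ (r - 1) * (1 + s ^ 2) * p ^ r := by
  have hsqrt : √q ≤ s * √p := by
    simpa [sqrt_mul' _ hp.le, sqrt_sq hs] using sqrt_le_sqrt hsq
  have hp'le : p' ≤ (1 + s) ^ 2 / 2 * p :=
    calc p' ≤ (√p + √q) ^ 2 / 2 := hang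
      _ ≤ ((1 + s) * √p) ^ 2 / 2 := by gcongr; linarith
      _ = (1 + s) ^ 2 / 2 * p := by rw [mul_pow, sq_sqrt hp.le]; ring
  calc p' ^ r + q' ^ r ≤ p' ^ (r - 1) * (p + q) :=
        hsum ▸ rpow_add_rpow_le_rpow_sub_one_mul_add hq' hqp' hr
    _ ≤ ((1 + s) ^ 2 / 2 * p) ^ (r - 1) * ((1 + s ^ 2) * p) := by
        gcongr <;> linarith
    _ = ((1 + s) ^ 2 / 2) ^ (r - 1) * (1 + s ^ 2) * p ^ r := by
        rw [mul_rpow (by positivity) hp.le, ← rpow_sub_one_mul_self hp.le (by linarith : r ≠ 0)]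
        ring

lemma povzner_restricted_angle_of_le {p q p' q' r s : ℝ} (hp : 0 < p) (hq : 0 ≤ q) (hqp : q ≤ p)
    (hp' : 0 ≤ p') (hq' : 0 ≤ q') (hqp' : q' ≤ p') (hsum : p' + q' = p + q)
    (hang : p' ≤ (√p + √q) ^ 2 / 2) (hr : 1 ≤ r) (hs : 0 < s) :
    p' ^ r + q' ^ r - p ^ r - q ^ r ≤
      2 ^ r / s * (p ^ (r - 1 / 2) * q ^ (1 / 2 : ℝ) + p ^ (1 / 2 : ℝ) * q ^ (r - 1 / 2))
        - (1 - ((1 + s) ^ 2 / 2) ^ (r - 1) * (1 + s ^ 2)) * (p ^ r + q ^ r) := by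
  set f := ((1 + s) ^ 2 / 2) ^ (r - 1) * (1 + s ^ 2)
  have hfp : 0 ≤ f * p ^ r := by positivity
  have hfq : 0 ≤ f * q ^ r := by positivity
  have hX : 0 ≤ 2 ^ r / s * (p ^ (r - 1 / 2) * q ^ (1 / 2 : ℝ)) := by positivity
  have hY : 0 ≤ 2 ^ r / s * (p ^ (1 / 2 : ℝ) * q ^ (r - 1 / 2)) := by positivity
  rw [mul_add, sub_mul, one_mul, mul_add]
  rcases le_total (s ^ 2 * p) q with hsq | hsq
  · linarith [rpow_add_rpow_le_cross_term_of_sq_mul_le hp hs hqp hsq hp' hq' hsum hr]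
  · linarith [rpow_add_rpow_le_of_le_sq_mul hp hs.le hsq hq' hqp' hsum hang hr]

theorem povzner_restricted_angle (r : ℝ) (hr : 1 < r) :
    ∃ C c : ℝ, 0 < C ∧ 0 < c ∧
      ∀ p0 q0 p'0 q'0 : ℝ, 1 ≤ p0 → 1 ≤ q0 → 1 ≤ p'0 → 1 ≤ q'0 →
        p'0 + q'0 = p0 + q0 →
        p'0 ≤ (Real.sqrt p0 + Real.sqrt q0) ^ 2 / 2 →
        q'0 ≤ p'0 →
        p'0 ^ r + q'0 ^ r - p0 ^ r - q0 ^ r ≤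
          C * (p0 ^ (r - 1 / 2) * q0 ^ (1 / 2 : ℝ)
              + p0 ^ (1 / 2 : ℝ) * q0 ^ (r - 1 / 2))
            - c * (p0 ^ r + q0 ^ r) := by
  obtain ⟨s, hs, hf⟩ := exists_pos_rpow_sq_div_two_mul_lt_one hr
  refine ⟨2 ^ r / s, 1 - ((1 + s) ^ 2 / 2) ^ (r - 1) * (1 + s ^ 2), by positivity, by linarith, ?_⟩
  intro p q p' q' hp hq hp' hq' hsum hang hqp'
  rcases le_total q p with hqp | hpq
  · exact povzner_restricted_angle_of_le (by linarith) (by linarith) hqp (by linarith)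
      (by linarith) hqp' hsum hang hr.le hs
  · have := povzner_restricted_angle_of_le (by linarith) (by linarith) hpq (by linarith)
      (by linarith) hqp' (by linarith) (by rwa [add_comm √q]) hr.le hs
    convert this using 1 <;> ring
end

section
/- Let r > 1 and p⁰, q⁰ ≥ 1. If p'⁰, q'⁰ > 0 satisfy p'⁰ + q'⁰ = p⁰ + q⁰, then G := (p'⁰)^r + (q'⁰)^r − (p⁰)^r − (q⁰)^r ≤ (p⁰+q⁰)^r − max{(p⁰)^r,(q⁰)^r} ≤ C_r ((p⁰)^{r−1} q⁰ + p⁰ (q⁰)^{r−1}) for a constant C_r depending only on r. -/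
/-!
Superadditivity of `x ↦ x ^ r` bounds the energy gain by `(p⁰ + q⁰) ^ r - p⁰ ^ r - q⁰ ^ r + min`,
that is, by `(p⁰ + q⁰) ^ r - max`. If `q⁰ ≤ p⁰` this is `(p⁰ + q⁰) ^ r - p⁰ ^ r`, which
Bernoulli's inequality bounds by `r (p⁰ + q⁰) ^ (r - 1) q⁰ ≤ r 2 ^ (r - 1) p⁰ ^ (r - 1) q⁰`.
-/

open Real

namespace Real

variable {r a b : ℝ}

theorem rpow_add_rpow_le_rpow_add (hr : 1 ≤ r) (ha : 0 ≤ a) (hb : 0 ≤ b) :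
    a ^ r + b ^ r ≤ (a + b) ^ r := by
  lift a to NNReal using ha
  lift b to NNReal using hb
  exact_mod_cast NNReal.add_rpow_le_rpow_add a b hr

theorem rpow_sub_rpow_le_mul_rpow_sub_one (hr : 1 ≤ r) (ha : 0 ≤ a) (hab : a ≤ b) :
    b ^ r - a ^ r ≤ r * b ^ (r - 1) * (b - a) := by
  obtain rfl | hb := (ha.trans hab).eq_or_lt
  · simp [le_antisymm hab ha]
  have bernoulli : 1 + r * (a / b - 1) ≤ (a / b) ^ r := by
    have hs : -1 ≤ a / b - 1 := by linarith [div_nonneg ha hb.le]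
    simpa using one_add_mul_self_le_rpow_one_add hs hr
  have hbr : b ^ r = b * b ^ (r - 1) := by
    rw [← rpow_one_add' hb.le (by linarith)]; ring_nf
  rw [div_rpow ha hb.le, le_div_iff₀ (by positivity), hbr] at bernoulli
  have expand : (1 + r * (a / b - 1)) * (b * b ^ (r - 1)) =
      b * b ^ (r - 1) + r * b ^ (r - 1) * (a - b) := by
    field_simp
  rw [hbr]
  linarith

end Real

section Povzner

variable {r p q : ℝ}

theorem add_rpow_sub_rpow_le (hr : 1 ≤ r) (hq : 0 ≤ q) (hqp : q ≤ p) :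
    (p + q) ^ r - p ^ r ≤ r * 2 ^ (r - 1) * (p ^ (r - 1) * q) := by
  have hp : 0 ≤ p := hq.trans hqp
  calc (p + q) ^ r - p ^ r ≤ r * (p + q) ^ (r - 1) * (p + q - p) :=
        rpow_sub_rpow_le_mul_rpow_sub_one hr hp (by linarith)
    _ ≤ r * (2 * p) ^ (r - 1) * q := by
        rw [add_sub_cancel_left]
        gcongr
        linarith
    _ = r * 2 ^ (r - 1) * (p ^ (r - 1) * q) := by
        rw [mul_rpow zero_le_two hp]; ring

theorem add_rpow_sub_max_le (hr : 1 ≤ r) (hp : 0 ≤ p) (hq : 0 ≤ q) :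
    (p + q) ^ r - max (p ^ r) (q ^ r) ≤
      r * 2 ^ (r - 1) * (p ^ (r - 1) * q + p * q ^ (r - 1)) := by
  wlog hqp : q ≤ p generalizing p q
  · have := this hq hp (le_of_not_ge hqp)
    rw [add_comm q, max_comm] at this
    linarith
  have hmax : max (p ^ r) (q ^ r) = p ^ r :=
    max_eq_left (rpow_le_rpow hq hqp (by linarith))
  have hmixed : 0 ≤ r * 2 ^ (r - 1) * (p * q ^ (r - 1)) := by
    have : 0 ≤ r := by linarith
    positivity
  linarith [add_rpow_sub_rpow_le hr hq hqp]

theorem rpow_add_rpow_sub_le_add_rpow_sub_max (hr : 1 ≤ r) {p' q' : ℝ} (hp : 0 ≤ p)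
    (hq : 0 ≤ q) (hp' : 0 ≤ p') (hq' : 0 ≤ q') (hsum : p' + q' = p + q) :
    p' ^ r + q' ^ r - p ^ r - q ^ r ≤ (p + q) ^ r - max (p ^ r) (q ^ r) := by
  have hsuper := rpow_add_rpow_le_rpow_add hr hp' hq'
  rw [hsum] at hsuper
  have hmin : 0 ≤ min (p ^ r) (q ^ r) := le_min (rpow_nonneg hp r) (rpow_nonneg hq r)
  linarith [max_add_min (p ^ r) (q ^ r)]

end Povzner

theorem povzner_general (r : ℝ) (hr : 1 < r) :
    ∃ C : ℝ, 0 < C ∧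
      ∀ p0 q0 p'0 q'0 : ℝ, 1 ≤ p0 → 1 ≤ q0 → 0 < p'0 → 0 < q'0 →
        p'0 + q'0 = p0 + q0 →
        p'0 ^ r + q'0 ^ r - p0 ^ r - q0 ^ r ≤
            (p0 + q0) ^ r - max (p0 ^ r) (q0 ^ r) ∧
        (p0 + q0) ^ r - max (p0 ^ r) (q0 ^ r) ≤
            C * (p0 ^ (r - 1) * q0 + p0 * q0 ^ (r - 1)) := by
  refine ⟨r * 2 ^ (r - 1), mul_pos (by linarith) (by positivity), ?_⟩
  intro p0 q0 p'0 q'0 hp hq hp' hq' hsum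
  have hp0 : 0 ≤ p0 := by linarith
  have hq0 : 0 ≤ q0 := by linarith
  exact ⟨rpow_add_rpow_sub_le_add_rpow_sub_max hr.le hp0 hq0 hp'.le hq'.le hsum,
    add_rpow_sub_max_le hr.le hp0 hq0⟩
end
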